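/- Fix n, n_u, n_y ∈ ℕ, matrices A ∈ ℝ^{n×n}, B ∈ ℝ^{n×n_u}, C ∈ ℝ^{n_y×n}, D ∈ ℝ^{n_y×n_u}, with (A,B) controllable. Let (u^d, y^d) be a trajectory of length N of the LTI system (A,B,C,D), let 1 ≤ ℓ ≤ N, and assume u^d is persistently exciting of order ℓ + n. Then the stacked Hankel matrix [H_ℓ(u^d); H_ℓ(y^d)] ∈ ℝ^{ℓ(n_u+n_y) × (N−ℓ+1)} has rank ℓ n_u + rank(O_ℓ), where O_ℓ is the observability matrix of depth ℓ. -/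

import Mathlib

/-
Along the data, the output Hankel matrix is `H_ℓ(y) = T H_ℓ(u) + O_ℓ X`, with `T` the block
Toeplitz matrix of Markov parameters and `X = [x_0 ⋯ x_{N-ℓ}]`, so that
`[H_ℓ(u); H_ℓ(y)] = [1 0; T O_ℓ] [H_ℓ(u); X]`. The rank of the block triangular factor is
`ℓ n_u + rank O_ℓ`, and it is not lowered by the right factor because `[H_ℓ(u); X]` has full
row rank (Willems' fundamental lemma). For the latter, let `(ξ, η)` annihilate `[H_ℓ(u); X]`.
Writing `x_{t+k}` through `x_t` and the inputs, the relations at the times `t, …, t + n`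
become relations on the windows `(x_t, u_t, …, u_{t+ℓ+n-1})`; combined with the coefficients
of the characteristic polynomial of `A`, Cayley–Hamilton eliminates `x_t` and leaves a vector
in the left kernel of `H_{ℓ+n}(u)`, which vanishes by persistency of excitation. Since the
characteristic polynomial is monic this is a triangular system forcing `ξ = 0` and
`η Aᵏ B = 0` for `k < n`, so `η = 0` by controllability.
-/

open Matrix

/-- `(u, y)` is a trajectory of length `N` of the LTI system `(A, B, C, D)`. -/
def IsTrajectory {n nu ny : ℕ} (A : Matrix (Fin n) (Fin n) ℝ) (B : Matrix (Fin n) (Fin nu) ℝ)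
    (C : Matrix (Fin ny) (Fin n) ℝ) (D : Matrix (Fin ny) (Fin nu) ℝ) (N : ℕ)
    (u : ℕ → Fin nu → ℝ) (y : ℕ → Fin ny → ℝ) : Prop :=
  ∃ x : ℕ → Fin n → ℝ,
    (∀ t, t + 1 < N → x (t + 1) = A.mulVec (x t) + B.mulVec (u t)) ∧
    (∀ t, t < N → y t = C.mulVec (x t) + D.mulVec (u t))

/-- The Hankel matrix of depth `ℓ` with `m = N - ℓ + 1` columns of a vector sequence `z`. -/
def hankel {nz : ℕ} (ℓ m : ℕ) (z : ℕ → Fin nz → ℝ) : Matrix (Fin ℓ × Fin nz) (Fin m) ℝ :=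
  Matrix.of fun p j => z ((p.1 : ℕ) + (j : ℕ)) p.2

/-- The controllability matrix `[B, AB, …, A^{n-1}B]`. -/
def ctrbMat {n nu : ℕ} (A : Matrix (Fin n) (Fin n) ℝ) (B : Matrix (Fin n) (Fin nu) ℝ) :
    Matrix (Fin n) (Fin n × Fin nu) ℝ :=
  Matrix.of fun i p => (A ^ (p.1 : ℕ) * B) i p.2

/-- The observability matrix of depth `ℓ`: the block matrix `[C; CA; …; CA^{ℓ-1}]`. -/
def obsMat {n ny : ℕ} (A : Matrix (Fin n) (Fin n) ℝ) (C : Matrix (Fin ny) (Fin n) ℝ)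
    (ℓ : ℕ) : Matrix (Fin ℓ × Fin ny) (Fin n) ℝ :=
  Matrix.of fun p j => (C * A ^ (p.1 : ℕ)) p.2 j

namespace Matrix

variable {K : Type*} [Field K] {α β γ δ : Type*}

theorem rank_eq_card_height_iff_forall_vecMul_eq_zero [Fintype α] [Fintype β]
    (M : Matrix α β K) : M.rank = Fintype.card α ↔ ∀ v, v ᵥ* M = 0 → v = 0 :=
  calc M.rank = Fintype.card α ↔ Function.Injective M.vecMul := by
        rw [vecMul_injective_iff, linearIndependent_iff_card_eq_finrank_span, Set.finrank,
          rank_eq_finrank_span_row, eq_comm]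
    _ ↔ ∀ v, v ᵥ* M = 0 → v = 0 := injective_iff_map_eq_zero M.vecMulLinear

theorem rank_mul_eq_left_of_rank_eq_card_height [Fintype β] [Fintype γ] (M : Matrix α β K)
    {P : Matrix β γ K} (hP : P.rank = Fintype.card β) : (M * P).rank = M.rank := by
  have hsurj : LinearMap.range P.mulVecLin = ⊤ :=
    Submodule.eq_top_of_finrank_eq (by rw [← rank, hP, Module.finrank_fintype_fun_eq_card])
  rw [rank, mulVecLin_mul, LinearMap.range_comp_of_range_eq_top _ hsurj, ← rank]

theorem rank_fromBlocks_one_zero [Fintype α] [Fintype δ] [DecidableEq α] (C : Matrix γ α K)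
    (D : Matrix γ δ K) : (fromBlocks (1 : Matrix α α K) 0 C D).rank = Fintype.card α + D.rank := by
  let ι : (δ → K) →ₗ[K] (α ⊕ δ → K) :=
    (LinearEquiv.sumArrowLequivProdArrow α δ K K).symm.toLinearMap ∘ₗ LinearMap.inr K _ _
  have hι : Function.Injective ι := fun v w h => funext fun d => congrFun h (Sum.inr d)
  have hker : LinearMap.ker (fromBlocks (1 : Matrix α α K) 0 C D).mulVecLin =
      (LinearMap.ker D.mulVecLin).map ι := by
    ext v
    obtain ⟨a, d, rfl⟩ : ∃ a d, v = Sum.elim a d := ⟨_, _, (Sum.elim_comp_inl_inr v).symm⟩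
    have hι_apply : ∀ y, ι y = Sum.elim (0 : α → K) y := fun y => by ext (_ | _) <;> simp [ι]
    simp only [LinearMap.mem_ker, mulVecLin_apply, fromBlocks_mulVec, Submodule.mem_map,
      hι_apply, Sum.elim_comp_inl, Sum.elim_comp_inr, one_mulVec, zero_mulVec, add_zero,
      ← Sum.elim_zero_zero, Sum.elim_eq_iff]
    constructor
    · rintro ⟨rfl, h⟩
      exact ⟨d, by simpa using h, rfl, rfl⟩
    · rintro ⟨y, hy, rfl, rfl⟩
      simp [hy]
  have hF :=
    LinearMap.finrank_range_add_finrank_ker (fromBlocks (1 : Matrix α α K) 0 C D).mulVecLin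
  have hD := LinearMap.finrank_range_add_finrank_ker D.mulVecLin
  rw [hker, ← LinearEquiv.finrank_eq (Submodule.equivMapOfInjective _ hι _)] at hF
  simp only [Module.finrank_fintype_fun_eq_card, Fintype.card_sum] at hF hD
  rw [rank, rank]
  omega

end Matrix

open Finset

theorem vecMul_hankel_apply {nz ℓ m : ℕ} (w z : ℕ → Fin nz → ℝ) (j : Fin m) :
    ((fun p : Fin ℓ × Fin nz => w p.1 p.2) ᵥ* hankel ℓ m z) j =
      ∑ i ∈ range ℓ, w i ⬝ᵥ z (i + j) := by
  simp only [vecMul, dotProduct, Fintype.sum_prod_type, hankel, of_apply]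
  exact Fin.sum_univ_eq_sum_range (fun i => ∑ a, w i a * z (i + j) a) ℓ

section LTI

variable {n nu ny : ℕ} (A : Matrix (Fin n) (Fin n) ℝ) (B : Matrix (Fin n) (Fin nu) ℝ)
  (C : Matrix (Fin ny) (Fin n) ℝ) (D : Matrix (Fin ny) (Fin nu) ℝ)

def markovParam : ℕ → Matrix (Fin ny) (Fin nu) ℝ
  | 0 => D
  | k + 1 => C * A ^ k * B

def markovToeplitz (ℓ : ℕ) : Matrix (Fin ℓ × Fin ny) (Fin ℓ × Fin nu) ℝ :=
  of fun p q => if (q.1 : ℕ) ≤ p.1 then markovParam A B C D (p.1 - q.1) p.2 q.2 else 0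

def stateMatrix (m : ℕ) (x : ℕ → Fin n → ℝ) : Matrix (Fin n) (Fin m) ℝ :=
  of fun i j => x j i

variable {A B C D} {N : ℕ} {u : ℕ → Fin nu → ℝ} {x : ℕ → Fin n → ℝ} {y : ℕ → Fin ny → ℝ}

theorem state_add_eq (hx : ∀ t, t + 1 < N → x (t + 1) = A *ᵥ x t + B *ᵥ u t) {k j : ℕ}
    (hkj : k + j < N) :
    x (k + j) = A ^ k *ᵥ x j + ∑ i ∈ range k, (A ^ (k - 1 - i) * B) *ᵥ u (i + j) := by
  induction k with
  | zero => simp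
  | succ k ih =>
    rw [add_right_comm, hx _ (by omega), ih (by omega), mulVec_add, mulVec_mulVec, ← pow_succ',
      mulVec_sum, sum_range_succ, Nat.add_sub_cancel, Nat.sub_self, pow_zero, Matrix.one_mul,
      add_assoc]
    congr 2
    refine sum_congr rfl fun i hi => ?_
    rw [mulVec_mulVec, ← Matrix.mul_assoc, ← pow_succ', show k - 1 - i + 1 = k - i by
      have := mem_range.mp hi; omega]

theorem output_add_eq (hx : ∀ t, t + 1 < N → x (t + 1) = A *ᵥ x t + B *ᵥ u t)
    (hy : ∀ t, t < N → y t = C *ᵥ x t + D *ᵥ u t) {k j : ℕ} (hkj : k + j < N) :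
    y (k + j) = (C * A ^ k) *ᵥ x j +
      ∑ i ∈ range (k + 1), markovParam A B C D (k - i) *ᵥ u (i + j) := by
  rw [hy _ hkj, state_add_eq hx hkj, mulVec_add, mulVec_mulVec, mulVec_sum, sum_range_succ,
    Nat.sub_self, add_assoc]
  congr 2
  refine sum_congr rfl fun i hi => ?_
  rw [mulVec_mulVec, show k - i = k - 1 - i + 1 by have := mem_range.mp hi; omega,
    markovParam, Matrix.mul_assoc]

theorem markovToeplitz_mul_hankel_apply {ℓ m : ℕ} (p : Fin ℓ) (b : Fin ny) (j : Fin m) :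
    (markovToeplitz A B C D ℓ * hankel ℓ m u) (p, b) j =
      (∑ i ∈ range (p + 1), markovParam A B C D (p - i) *ᵥ u (i + j)) b := by
  let w : ℕ → Fin nu → ℝ := fun i a => if i ≤ p then markovParam A B C D (p - i) b a else 0
  have hrow : markovToeplitz A B C D ℓ (p, b) = fun q => w q.1 q.2 := rfl
  rw [mul_apply_eq_vecMul, hrow, vecMul_hankel_apply,
    ← sum_range_add_sum_Ico _ (by omega : p + 1 ≤ ℓ), sum_eq_zero (s := Ico _ _) fun i hi => by
      simp [w, show ¬ i ≤ p by have := (mem_Ico.mp hi).1; omega], add_zero, Finset.sum_apply]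
  refine sum_congr rfl fun i hi => ?_
  simp [w, Nat.le_of_lt_succ (mem_range.mp hi), mulVec, dotProduct]

theorem hankel_output_eq (hx : ∀ t, t + 1 < N → x (t + 1) = A *ᵥ x t + B *ᵥ u t)
    (hy : ∀ t, t < N → y t = C *ᵥ x t + D *ᵥ u t) {ℓ : ℕ} (hℓN : ℓ ≤ N) :
    hankel ℓ (N - ℓ + 1) y = markovToeplitz A B C D ℓ * hankel ℓ (N - ℓ + 1) u +
      obsMat A C ℓ * stateMatrix (N - ℓ + 1) x := by
  ext ⟨p, b⟩ j
  rw [Matrix.add_apply, markovToeplitz_mul_hankel_apply, hankel, of_apply,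
    output_add_eq hx hy (by omega)]
  simp [mul_apply, obsMat, stateMatrix, mulVec, dotProduct, add_comm]

end LTI

theorem Matrix.sum_charpoly_coeff_smul_pow {R : Type*} [CommRing R] [Nontrivial R] {n : ℕ}
    (A : Matrix (Fin n) (Fin n) R) : ∑ k ∈ range (n + 1), A.charpoly.coeff k • A ^ k = 0 := by
  simpa [Polynomial.aeval_eq_sum_range] using aeval_self_charpoly A

theorem eq_zero_of_monic_recurrence {R M : Type*} [Semiring R] [AddCommMonoid M] [Module R M]
    {c : ℕ → R} {n K : ℕ} (hc : c n = 1) {φ : ℕ → M} (htail : ∀ m, K ≤ m → φ m = 0)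
    (hrec : ∀ r < K, ∑ k ∈ range (n + 1), c k • φ (r + n - k) = 0) (m : ℕ) : φ m = 0 := by
  induction h : K - m using Nat.strong_induction_on generalizing m with
  | _ d ih =>
    by_cases hm : K ≤ m
    · exact htail m hm
    have hlater : ∀ k ∈ range n, φ (m + n - k) = 0 := fun k hk =>
      ih (K - (m + n - k)) (by have := mem_range.mp hk; omega) _ rfl
    have hm' := hrec m (by omega)
    rwa [sum_range_succ, sum_eq_zero fun k hk => by rw [hlater k hk, smul_zero], hc, one_smul,
      Nat.add_sub_cancel, zero_add] at hm'

section Willems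

variable {n nu : ℕ} {A : Matrix (Fin n) (Fin n) ℝ} {B : Matrix (Fin n) (Fin nu) ℝ}
  {N : ℕ} {u : ℕ → Fin nu → ℝ} {x : ℕ → Fin n → ℝ}

-- the sequence `η A^{n-1} B, …, η A B, η B, ξ 0, ξ 1, …`
variable (A B) in
def unrolledCoeff (ξ : ℕ → Fin nu → ℝ) (η : Fin n → ℝ) (m : ℕ) : Fin nu → ℝ :=
  if m < n then η ᵥ* (A ^ (n - 1 - m) * B) else ξ (m - n)

theorem sum_unrolledCoeff_dotProduct (hx : ∀ t, t + 1 < N → x (t + 1) = A *ᵥ x t + B *ᵥ u t)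
    {ℓ : ℕ} {ξ : ℕ → Fin nu → ℝ} (hξ : ∀ i, ℓ ≤ i → ξ i = 0) (η : Fin n → ℝ) {k t : ℕ}
    (hk : k ≤ n) (hkt : k + t < N) :
    ∑ r ∈ range (ℓ + n), unrolledCoeff A B ξ η (r + n - k) ⬝ᵥ u (r + t) +
        (η ᵥ* A ^ k) ⬝ᵥ x t =
      ∑ i ∈ range ℓ, ξ i ⬝ᵥ u (i + (k + t)) + η ⬝ᵥ x (k + t) := by
  have hpast : ∑ r ∈ range k, unrolledCoeff A B ξ η (r + n - k) ⬝ᵥ u (r + t) =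
      ∑ i ∈ range k, η ⬝ᵥ (A ^ (k - 1 - i) * B) *ᵥ u (i + t) := by
    refine sum_congr rfl fun r hr => ?_
    have := mem_range.mp hr
    rw [unrolledCoeff, if_pos (by omega), dotProduct_mulVec, show n - 1 - (r + n - k) = k - 1 - r by
      omega]
  have hwindow : ∑ i ∈ range ℓ, unrolledCoeff A B ξ η (k + i + n - k) ⬝ᵥ u (k + i + t) =
      ∑ i ∈ range ℓ, ξ i ⬝ᵥ u (i + (k + t)) := by
    refine sum_congr rfl fun i _ => ?_
    rw [unrolledCoeff, if_neg (by omega), show k + i + n - k - n = i by omega,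
      show k + i + t = i + (k + t) by omega]
  have hfuture : ∑ i ∈ range (n - k), unrolledCoeff A B ξ η (k + ℓ + i + n - k) ⬝ᵥ
      u (k + ℓ + i + t) = 0 :=
    sum_eq_zero fun i _ => by
      rw [unrolledCoeff, if_neg (by omega), hξ _ (by omega), zero_dotProduct]
  rw [show ℓ + n = k + ℓ + (n - k) by omega, sum_range_add, sum_range_add, hpast, hwindow,
    hfuture, state_add_eq hx hkt, dotProduct_add, dotProduct_mulVec, dotProduct_sum]
  abel

theorem eq_zero_of_annihilates_hankel_state (hctrb : (ctrbMat A B).rank = n)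
    (hx : ∀ t, t + 1 < N → x (t + 1) = A *ᵥ x t + B *ᵥ u t) {ℓ : ℕ} (hℓ : 1 ≤ ℓ)
    (hN : ℓ + n ≤ N) (hPE : (hankel (ℓ + n) (N - (ℓ + n) + 1) u).rank = (ℓ + n) * nu)
    {ξ : ℕ → Fin nu → ℝ} (hξ : ∀ i, ℓ ≤ i → ξ i = 0) {η : Fin n → ℝ}
    (hcol : ∀ t, t + ℓ ≤ N → ∑ i ∈ range ℓ, ξ i ⬝ᵥ u (i + t) + η ⬝ᵥ x t = 0) :
    ξ = 0 ∧ η = 0 := by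
  have hPE_ker := (rank_eq_card_height_iff_forall_vecMul_eq_zero
    (hankel (ℓ + n) (N - (ℓ + n) + 1) u)).mp (by simpa [mul_comm] using hPE)
  set c : ℕ → ℝ := fun k => A.charpoly.coeff k
  set φ := unrolledCoeff A B ξ η
  have hψ : (fun p : Fin (ℓ + n) × Fin nu => (∑ k ∈ range (n + 1), c k • φ (p.1 + n - k)) p.2) ᵥ*
      hankel (ℓ + n) (N - (ℓ + n) + 1) u = 0 := by
    ext t
    rw [vecMul_hankel_apply (fun r => ∑ k ∈ range (n + 1), c k • φ (r + n - k))]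
    have hCH : ∑ k ∈ range (n + 1), c k * ((η ᵥ* A ^ k) ⬝ᵥ x t) = 0 := by
      simpa [vecMul_sum, sum_dotProduct, vecMul_smul, c] using
        congrArg (fun M => (η ᵥ* M) ⬝ᵥ x t) (sum_charpoly_coeff_smul_pow A)
    calc ∑ r ∈ range (ℓ + n), (∑ k ∈ range (n + 1), c k • φ (r + n - k)) ⬝ᵥ u (r + t)
        = ∑ k ∈ range (n + 1), c k * (∑ r ∈ range (ℓ + n), φ (r + n - k) ⬝ᵥ u (r + t) +
            (η ᵥ* A ^ k) ⬝ᵥ x t) := by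
          simp only [sum_dotProduct, smul_dotProduct, smul_eq_mul, mul_add, sum_add_distrib, hCH,
            add_zero, mul_sum]
          exact sum_comm
      _ = 0 := sum_eq_zero fun k hk => by
          have := mem_range.mp hk
          rw [sum_unrolledCoeff_dotProduct hx hξ η (by omega) (by omega), hcol _ (by omega),
            mul_zero]
  have hrec : ∀ r < ℓ + n, ∑ k ∈ range (n + 1), c k • φ (r + n - k) = 0 := fun r hr => by
    ext a
    simpa using congrFun (hPE_ker _ hψ) (⟨r, hr⟩, a)
  have hφ : ∀ m, φ m = 0 :=
    eq_zero_of_monic_recurrence (by simpa using (charpoly_monic A).coeff_natDegree)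
      (fun m hm => by simp [φ, unrolledCoeff, show ¬ m < n by omega, hξ (m - n) (by omega)]) hrec
  refine ⟨funext fun i => by simpa [φ, unrolledCoeff] using hφ (i + n), ?_⟩
  refine (rank_eq_card_height_iff_forall_vecMul_eq_zero _).mp (by simpa using hctrb) η
    (funext fun p => ?_)
  have hp := congrFun (hφ (n - 1 - p.1)) p.2
  simp only [φ, unrolledCoeff, if_pos (show n - 1 - p.1 < n by omega),
    show n - 1 - (n - 1 - p.1) = p.1 by omega] at hp
  simpa [vecMul, dotProduct, ctrbMat] using hp

theorem add_le_of_rank_ctrbMat_of_rank_hankel (hctrb : (ctrbMat A B).rank = n) {ℓ : ℕ}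
    (hℓ : 1 ≤ ℓ) (hℓN : ℓ ≤ N) (hPE : (hankel (ℓ + n) (N - (ℓ + n) + 1) u).rank = (ℓ + n) * nu) :
    ℓ + n ≤ N := by
  rcases Nat.eq_zero_or_pos nu with rfl | hnu
  · have := hctrb ▸ (ctrbMat A B).rank_le_card_width
    simp only [Fintype.card_prod, Fintype.card_fin, mul_zero] at this
    omega
  · have := hPE ▸ (hankel (ℓ + n) (N - (ℓ + n) + 1) u).rank_le_card_width
    simp only [Fintype.card_fin] at this
    have := Nat.le_mul_of_pos_right (ℓ + n) hnu
    omega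

theorem rank_fromRows_hankel_stateMatrix (hctrb : (ctrbMat A B).rank = n)
    (hx : ∀ t, t + 1 < N → x (t + 1) = A *ᵥ x t + B *ᵥ u t) {ℓ : ℕ} (hℓ : 1 ≤ ℓ)
    (hℓN : ℓ ≤ N) (hPE : (hankel (ℓ + n) (N - (ℓ + n) + 1) u).rank = (ℓ + n) * nu) :
    (fromRows (hankel ℓ (N - ℓ + 1) u) (stateMatrix (N - ℓ + 1) x)).rank = ℓ * nu + n := by
  suffices h : ∀ v, v ᵥ* fromRows (hankel ℓ (N - ℓ + 1) u) (stateMatrix (N - ℓ + 1) x) = 0 →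
      v = 0 by
    simpa [mul_comm] using (rank_eq_card_height_iff_forall_vecMul_eq_zero _).mpr h
  have hN := add_le_of_rank_ctrbMat_of_rank_hankel hctrb hℓ hℓN hPE
  intro v hv
  let ξ : ℕ → Fin nu → ℝ := fun i a => if h : i < ℓ then v (Sum.inl (⟨i, h⟩, a)) else 0
  have hv_inl : v ∘ Sum.inl = fun p => ξ p.1 p.2 := by funext p; simp [ξ]
  obtain ⟨hξ, hη⟩ := eq_zero_of_annihilates_hankel_state hctrb hx hℓ hN hPE (ξ := ξ)
    (η := v ∘ Sum.inr) (fun i hi => by ext; simp [ξ, not_lt.mpr hi]) fun t ht => by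
      have := congrFun hv ⟨t, by omega⟩
      rw [vecMul_fromRows, hv_inl, Pi.add_apply, vecMul_hankel_apply] at this
      simpa [stateMatrix, vecMul, dotProduct] using this
  ext (p | i)
  · simpa [ξ] using congrFun (congrFun hξ p.1) p.2
  · exact congrFun hη i

end Willems

/-- If `(A, B)` is controllable, `(u^d, y^d)` is a trajectory of length `N`, and `u^d` is
persistently exciting of order `ℓ + n`, then the stacked Hankel matrix
`[H_ℓ(u^d); H_ℓ(y^d)]` has rank `ℓ n_u + rank O_ℓ`. -/
theorem stacked_hankel_rank {n nu ny : ℕ}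
    (A : Matrix (Fin n) (Fin n) ℝ) (B : Matrix (Fin n) (Fin nu) ℝ)
    (C : Matrix (Fin ny) (Fin n) ℝ) (D : Matrix (Fin ny) (Fin nu) ℝ)
    (hctrb : (ctrbMat A B).rank = n)
    (N : ℕ) (ud : ℕ → Fin nu → ℝ) (yd : ℕ → Fin ny → ℝ)
    (hdata : IsTrajectory A B C D N ud yd)
    (ℓ : ℕ) (hℓ : 1 ≤ ℓ) (hℓN : ℓ ≤ N)
    (hPE : (hankel (ℓ + n) (N - (ℓ + n) + 1) ud).rank = (ℓ + n) * nu) :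
    (Matrix.fromRows (hankel ℓ (N - ℓ + 1) ud) (hankel ℓ (N - ℓ + 1) yd)).rank
      = ℓ * nu + (obsMat A C ℓ).rank := by
  obtain ⟨x, hx, hy⟩ := hdata
  have hfactor : fromRows (hankel ℓ (N - ℓ + 1) ud) (hankel ℓ (N - ℓ + 1) yd) =
      fromBlocks 1 0 (markovToeplitz A B C D ℓ) (obsMat A C ℓ) *
        fromRows (hankel ℓ (N - ℓ + 1) ud) (stateMatrix (N - ℓ + 1) x) := by
    rw [fromBlocks_mul_fromRows, hankel_output_eq hx hy hℓN]
    simp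
  rw [hfactor, rank_mul_eq_left_of_rank_eq_card_height _ (by
      simpa [mul_comm] using rank_fromRows_hankel_stateMatrix hctrb hx hℓ hℓN hPE),
    rank_fromBlocks_one_zero]
  simp [mul_comm]
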